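/- Let A, B be nondeterministic Büchi automata over the same alphabet Σ and let f : ARun(A) → ARun(B) be a continuous function (with respect to the metric d(x,y) = inf{2^{-i} : x_j = y_j for all j < i} on infinite sequences). Then Duplicator has a winning strategy in the delay game G^f_del(A,B), i.e. A ⊑^f_del B. -/

import Mathlib

open Classical

noncomputable section

namespace MultiBuffer

/-! ### Nondeterministic Büchi automata -/

/-- A nondeterministic Büchi automaton over the alphabet `α`. -/
structure NBA (α : Type) : Type 1 where
  Q : Type
  finQ : Fintype Q
  init : Q
  δ : Q → α → Set Q
  F : Set Q

variable {α P Q : Type} {k : ℕ}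

/-- `r` is (the state sequence of) a run of `A` on the infinite word `w`. -/
def IsRun (A : NBA α) (w : ℕ → α) (r : ℕ → A.Q) : Prop :=
  r 0 = A.init ∧ ∀ n, r (n + 1) ∈ A.δ (r n) (w n)

/-- The state sequence `r` visits accepting states infinitely often. -/
def AcceptingStates (A : NBA α) (r : ℕ → A.Q) : Prop :=
  {n | r n ∈ A.F}.Infinite

/-- The ω-language of a Büchi automaton. -/
def Lang (A : NBA α) : Set (ℕ → α) :=
  {w | ∃ r, IsRun A w r ∧ AcceptingStates A r}

/-! ### Finite or infinite words, projections and trace equivalence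

A finite or infinite word over `α` is represented as a function `ℕ → Option α`
which is `none` from some point on (if finite); infinite words embed via `ofInf`. -/

/-- The infinite word `u` viewed as an element of `Σ^∞`. -/
def ofInf (u : ℕ → α) : ℕ → Option α := fun n => some (u n)

/-- A function `ℕ → Option α` represents a finite or infinite word if after the
first `none` everything is `none`. -/
def Stable (w : ℕ → Option α) : Prop := ∀ n, w n = none → w (n + 1) = none

/-- The number of `i < j` satisfying `p`. -/
def countBelow (p : ℕ → Prop) (j : ℕ) : ℕ := {i | i < j ∧ p i}.ncard

/-- Position `j` of the word `w` carries a letter belonging to `S`. -/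
def InS (S : Set α) (w : ℕ → Option α) (j : ℕ) : Prop := ∃ a ∈ S, w j = some a

/-- The projection `π_S(w)` of the word `w` to the subalphabet `S`: the word obtained
from `w` by deleting all letters not in `S`. -/
def proj (S : Set α) (w : ℕ → Option α) (n : ℕ) : Option α :=
  if h : ∃ j, InS S w j ∧ countBelow (InS S w) j = n then w h.choose else none

/-- Trace equivalence of (finite or infinite) words w.r.t. the trace alphabet
`σ = (Σ_i)_{i ∈ [k]}` : all projections coincide. -/
def TraceEquiv (σ : Fin k → Set α) (u v : ℕ → Option α) : Prop :=
  ∀ i, proj (σ i) u = proj (σ i) v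

/-- The trace closure of a language of infinite words. -/
def closure (σ : Fin k → Set α) (L : Set (ℕ → α)) : Set (ℕ → α) :=
  {v | ∃ u ∈ L, TraceEquiv σ (ofInf u) (ofInf v)}

/-! ### The multi-buffer game -/

/-- A configuration of the multi-buffer game: a state of Spoiler's automaton,
the contents of the `k` buffers, and a state of Duplicator's automaton. -/
structure Conf (α P Q : Type) (k : ℕ) where
  p : P
  bufs : Fin k → List α
  q : Q

/-- Appending the letter `a` to the back of every buffer `i` with `a ∈ σ i`. -/
def push (σ : Fin k → Set α) (bufs : Fin k → List α) (a : α) : Fin k → List α :=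
  fun i => if a ∈ σ i then bufs i ++ [a] else bufs i

/-- Popping the letter `b` from the front of every buffer `i` with `b ∈ σ i`. -/
def pop (σ : Fin k → Set α) (bufs : Fin k → List α) (b : α) : Fin k → List α :=
  fun i => if b ∈ σ i then (bufs i).tail else bufs i

/-- Effect of a Spoiler move `m = (a, p')` on a configuration. -/
def spApply (σ : Fin k → Set α) (c : Conf α P Q k) (m : α × P) : Conf α P Q k :=
  ⟨m.2, push σ c.bufs m.1, c.q⟩

/-- Effect of a (possibly empty) Duplicator move `d = (b₁,q₁)...(b_n,q_n)`. -/
def dupApply (σ : Fin k → Set α) (c : Conf α P Q k) (d : List (α × Q)) : Conf α P Q k :=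
  ⟨c.p, d.foldl (fun bs m => pop σ bs m.1) c.bufs, ((d.getLast?).map Prod.snd).getD c.q⟩

/-- Legality of a Spoiler move: it follows a transition of his automaton. -/
def SpLegal (δA : P → α → Set P) (c : Conf α P Q k) (m : α × P) : Prop :=
  m.2 ∈ δA c.p m.1

/-- Legality of a Duplicator move from a configuration: the moves form a run of her
automaton and each letter is removed from the front of the corresponding buffers. -/
def DupLegal (σ : Fin k → Set α) (δB : Q → α → Set Q) :
    Conf α P Q k → List (α × Q) → Prop
  | _, [] => True
  | c, m :: rest =>
      m.2 ∈ δB c.q m.1 ∧ (∀ i, m.1 ∈ σ i → (c.bufs i).head? = some m.1) ∧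
      DupLegal σ δB ⟨c.p, pop σ c.bufs m.1, m.2⟩ rest

/-- The capacity constraints (checked after a full round). -/
def CapOk (κ : Fin k → ℕ∞) (c : Conf α P Q k) : Prop :=
  ∀ i, ((c.bufs i).length : ℕ∞) ≤ κ i

/-- The list of the first `n` values of the sequence `s`. -/
def hist {β : Type} (s : ℕ → β) (n : ℕ) : List β := List.ofFn (fun i : Fin n => s i)

/-- The configuration of the play after `n` full rounds, when Spoiler plays the
sequence `s` of moves and Duplicator follows the strategy `θ` (which maps the
history of Spoiler moves, including the current one, to her response). -/
def playConf (σ : Fin k → Set α) (θ : List (α × P) → List (α × Q))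
    (c0 : Conf α P Q k) (s : ℕ → α × P) : ℕ → Conf α P Q k
  | 0 => c0
  | n + 1 => dupApply σ (spApply σ (playConf σ θ c0 s n) (s n)) (θ (hist s (n + 1)))

/-- Duplicator's response in round `n`. -/
def resp (θ : List (α × P) → List (α × Q)) (s : ℕ → α × P) (n : ℕ) : List (α × Q) :=
  θ (hist s (n + 1))

/-- Spoiler's move in round `n` is legal. -/
def SpLegalAt (σ : Fin k → Set α) (δA : P → α → Set P) (θ : List (α × P) → List (α × Q))
    (c0 : Conf α P Q k) (s : ℕ → α × P) (n : ℕ) : Prop :=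
  SpLegal δA (playConf σ θ c0 s n) (s n)

/-- Duplicator's response in round `n` is legal and the capacities are respected
after the round. -/
def DupOkAt (σ : Fin k → Set α) (κ : Fin k → ℕ∞) (δB : Q → α → Set Q)
    (θ : List (α × P) → List (α × Q)) (c0 : Conf α P Q k) (s : ℕ → α × P) (n : ℕ) : Prop :=
  DupLegal σ δB (spApply σ (playConf σ θ c0 s n) (s n)) (resp θ s n) ∧
  CapOk κ (playConf σ θ c0 s (n + 1))

/-- The number of occurrences of the letter `a` in Spoiler's word. -/
def spOcc (s : ℕ → α × P) (a : α) : ℕ∞ := {n | (s n).1 = a}.encard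

/-- The number of occurrences of the letter `a` in Duplicator's word. -/
def dupOcc (θ : List (α × P) → List (α × Q)) (s : ℕ → α × P) (a : α) : ℕ∞ :=
  {x : ℕ × ℕ | ∃ m, (resp θ s x.1)[x.2]? = some m ∧ m.1 = a}.encard

/-- Spoiler's run is accepting. -/
def SpAccept (FA : Set P) (s : ℕ → α × P) : Prop := {n | (s n).2 ∈ FA}.Infinite

/-- Duplicator's run is (infinite and) accepting. -/
def DupAccept (FB : Set Q) (θ : List (α × P) → List (α × Q)) (s : ℕ → α × P) : Prop :=
  {n | ∃ m ∈ resp θ s n, m.2 ∈ FB}.Infinite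

/-- Duplicator has a winning strategy in the multi-buffer game (with buffer alphabets
`σ`, capacities `κ`) played on the transition structures `δA`, `δB` with acceptance
sets `FA`, `FB`, starting from the configuration `c0`: she always has legal responses
(as long as Spoiler has played legally), and if the resulting infinite play carries an
accepting run of Spoiler then her own run is infinite and accepting and every letter
occurs equally often in both words (i.e. every letter put into a buffer is eventually
read). Finite plays in which a player is stuck are lost by that player. -/
def DupWinsFrom (σ : Fin k → Set α) (κ : Fin k → ℕ∞) (δA : P → α → Set P)
    (δB : Q → α → Set Q) (FA : Set P) (FB : Set Q) (c0 : Conf α P Q k) : Prop :=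
  ∃ θ : List (α × P) → List (α × Q),
    ∀ s : ℕ → α × P,
      (∀ n, (∀ m ≤ n, SpLegalAt σ δA θ c0 s m) → DupOkAt σ κ δB θ c0 s n) ∧
      ((∀ n, SpLegalAt σ δA θ c0 s n) → SpAccept FA s →
        DupAccept FB θ s ∧ ∀ a : α, spOcc s a = dupOcc θ s a)

/-- The multi-buffer simulation `A ⊑^κ_σ B`. -/
def Simu (σ : Fin k → Set α) (κ : Fin k → ℕ∞) (A B : NBA α) : Prop :=
  DupWinsFrom σ κ A.δ B.δ A.F B.F ⟨A.init, fun _ => [], B.init⟩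


/-! ### Accepting runs, the metric on runs, continuity and trace preservation -/

variable {α : Type}

/-- The set of accepting runs of an NBA, as a type: a run `q₀ a₀ q₁ a₁ ⋯` is given
by its state sequence and its word, and it must start in the initial state, follow
the transition function, and visit `F` infinitely often. -/
def ARun (A : NBA α) : Type :=
  {x : (ℕ → A.Q) × (ℕ → α) //
    x.1 0 = A.init ∧ (∀ n, x.1 (n + 1) ∈ A.δ (x.1 n) (x.2 n)) ∧ {n | x.1 n ∈ A.F}.Infinite}

/-- An accepting run viewed as the infinite sequence `q₀ a₀ q₁ a₁ ⋯ ∈ (Q ∪ Σ)^ω`. -/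
def seqOf {A : NBA α} (ρ : ARun A) : ℕ → A.Q ⊕ α :=
  fun n => if n % 2 = 0 then Sum.inl (ρ.val.1 (n / 2)) else Sum.inr (ρ.val.2 (n / 2))

/-- Continuity of `f : ARun A → ARun B` with respect to the metric
`d(x,y) = inf {2^{-i} ∣ x_j = y_j for all j < i}` on the sequences in `(Q ∪ Σ)^ω`:
for every run `ρ` and every required output precision `2^{-n}` there is an input
precision `2^{-m}` such that runs `2^{-m}`-close to `ρ` are mapped to runs
`2^{-n}`-close to `f ρ`. -/
def ContinuousRF {A B : NBA α} (f : ARun A → ARun B) : Prop :=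
  ∀ (ρ : ARun A) (n : ℕ), ∃ m : ℕ, ∀ ρ' : ARun A,
    (∀ j < m, seqOf ρ' j = seqOf ρ j) → ∀ j < n, seqOf (f ρ') j = seqOf (f ρ) j

/-- `f : ARun A → ARun B` is trace-preserving: the word of `f ρ` is trace
equivalent to the word of `ρ`. -/
def TracePres {k : ℕ} (σ : Fin k → Set α) {A B : NBA α} (f : ARun A → ARun B) : Prop :=
  ∀ ρ : ARun A, TraceEquiv σ (ofInf ρ.val.2) (ofInf (f ρ).val.2)

/-- The capacity function making all `k` buffers unbounded. -/
def kapAllOmega (k : ℕ) : Fin k → ℕ∞ := fun _ => ⊤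

/-- A list of moves `(a₁,q₁)(a₂,q₂)⋯` is a finite run of the transition structure
of `B` starting in the state `q`. -/
def FinRunOk (B : NBA α) : B.Q → List (α × B.Q) → Prop
  | _, [] => True
  | q, m :: rest => m.2 ∈ B.δ q m.1 ∧ FinRunOk B m.2 rest

/-- The state sequence of Spoiler's run determined by his moves `s` in the delay
game (in round `n` he appends the letter `(s n).1` and moves to the state `(s n).2`). -/
def spState (A : NBA α) (s : ℕ → α × A.Q) : ℕ → A.Q
  | 0 => A.init
  | n + 1 => (s n).2

/-- The concatenation of Duplicator's responses in the first `n` rounds of the delay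
game, her strategy `θ` mapping the history of Spoiler moves (including the current
one) to the finite extension of her run she plays in that round. -/
def dOut {QB : Type} (θ : List (α × P) → List (α × QB)) (s : ℕ → α × P) : ℕ → List (α × QB)
  | 0 => []
  | n + 1 => dOut θ s n ++ θ (hist s (n + 1))

/-- Duplicator has a winning strategy in the delay game `G^f_del(A,B)`: in every
round Spoiler extends his run by one transition and Duplicator extends hers by
`n ≥ 0` transitions; Duplicator's moves must always be legal, and if Spoiler's moves
form an (infinite) accepting run `ρ` of `A` then Duplicator's run `ρ'` must be the
infinite run `f ρ` (since elements of `ARun A` are accepting by definition, the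
quantification over `ρ : ARun A` below is vacuous when Spoiler's run is not
accepting, in which case Duplicator wins anyway). -/
def DelayWin (A B : NBA α) (f : ARun A → ARun B) : Prop :=
  ∃ θ : List (α × A.Q) → List (α × B.Q),
    ∀ s : ℕ → α × A.Q,
      (∀ n, (∀ m < n, (s m).2 ∈ A.δ (spState A s m) (s m).1) →
        FinRunOk B B.init (dOut θ s n)) ∧
      ((∀ n, (s n).2 ∈ A.δ (spState A s n) (s n).1) →
        ∀ ρ : ARun A, ρ.val.1 = spState A s → ρ.val.2 = (fun n => (s n).1) →
          (∀ N : ℕ, ∃ n, N ≤ (dOut θ s n).length) ∧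
          (∀ n i x, (dOut θ s n)[i]? = some x → x = ((f ρ).val.2 i, (f ρ).val.1 (i + 1))))

/-! After Spoiler has played a finite prefix `h` of his run, Duplicator plays the longest
prefix (of length at most `|h|`) of the output that `f ρ` shares for all accepting runs `ρ`
extending `h`. This output only grows as `h` grows, so she can play it incrementally; it is a
prefix of `f ρ` for the run `ρ` Spoiler eventually produces, and continuity of `f` at `ρ`
makes its length unbounded. -/

section Hist

variable {β : Type} (s t : ℕ → β)

lemma hist_length (n : ℕ) : (hist s n).length = n := by
  simp [hist]

lemma getElem?_hist (n i : ℕ) : (hist s n)[i]? = if i < n then some (s i) else none := by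
  simp only [hist, List.getElem?_ofFn]
  split_ifs <;> rfl

lemma hist_eq_hist_iff (n : ℕ) : hist s n = hist t n ↔ ∀ i < n, s i = t i := by
  simp [hist, List.ofFn_inj, funext_iff, Fin.forall_iff]

lemma hist_succ (n : ℕ) : hist s (n + 1) = hist s n ++ [s n] := by
  simp only [hist, List.ofFn_succ', List.concat_eq_append]
  rfl

lemma hist_succ_eq_cons (n : ℕ) : hist s (n + 1) = s 0 :: hist (fun i => s (i + 1)) n := by
  simp [hist, List.ofFn_succ]

lemma take_hist (m n : ℕ) : (hist s n).take m = hist s (min m n) := by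
  refine List.ext_getElem? fun i => ?_
  simp only [List.getElem?_take, getElem?_hist]
  split_ifs <;> first | rfl | omega

lemma hist_prefix_hist {m n : ℕ} (h : m ≤ n) : hist s m <+: hist s n := by
  rw [← min_eq_left h, ← take_hist]
  exact List.take_prefix _ _

end Hist

lemma finRunOk_hist (B : NBA α) {r : ℕ → B.Q} {w : ℕ → α}
    (hr : ∀ i, r (i + 1) ∈ B.δ (r i) (w i)) (n : ℕ) :
    FinRunOk B (r 0) (hist (fun i => (w i, r (i + 1))) n) := by
  induction n generalizing r w with
  | zero => trivial
  | succ n ih =>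
    rw [hist_succ_eq_cons]
    exact ⟨hr 0, ih fun i => hr (i + 1)⟩

section Runs

variable {A B : NBA α}

/-- The moves of the delay game are the transitions `(aᵢ, qᵢ₊₁)` of runs. -/
def transitions (ρ : ARun A) (i : ℕ) : α × A.Q := (ρ.val.2 i, ρ.val.1 (i + 1))

lemma finRunOk_hist_transitions (ρ : ARun B) (n : ℕ) :
    FinRunOk B B.init (hist (transitions ρ) n) := by
  rw [← ρ.property.1]
  exact finRunOk_hist B ρ.property.2.1 n

lemma seqOf_two_mul (ρ : ARun A) (i : ℕ) : seqOf ρ (2 * i) = Sum.inl (ρ.val.1 i) := by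
  simp [seqOf]

lemma seqOf_two_mul_add_one (ρ : ARun A) (i : ℕ) :
    seqOf ρ (2 * i + 1) = Sum.inr (ρ.val.2 i) := by
  rw [seqOf, if_neg (by omega), show (2 * i + 1) / 2 = i by omega]

/-- All runs start in the initial state, so `q₀` carries no information. -/
lemma seqOf_eq_iff_hist_transitions_eq (ρ ρ' : ARun A) (n : ℕ) :
    (∀ j < 2 * n + 1, seqOf ρ j = seqOf ρ' j) ↔
      hist (transitions ρ) n = hist (transitions ρ') n := by
  rw [hist_eq_hist_iff]
  constructor
  · intro h i hi
    have hletter := h (2 * i + 1) (by omega)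
    have hstate := h (2 * (i + 1)) (by omega)
    rw [seqOf_two_mul_add_one, seqOf_two_mul_add_one, Sum.inr.injEq] at hletter
    rw [seqOf_two_mul, seqOf_two_mul, Sum.inl.injEq] at hstate
    simp only [transitions, hletter, hstate]
  · intro h j hj
    obtain ⟨i, rfl | rfl⟩ := Nat.even_or_odd' j
    · rw [seqOf_two_mul, seqOf_two_mul]
      cases i with
      | zero => rw [ρ.property.1, ρ'.property.1]
      | succ i => exact congrArg (Sum.inl ∘ Prod.snd) (h i (by omega))
    · rw [seqOf_two_mul_add_one, seqOf_two_mul_add_one]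
      exact congrArg (Sum.inr ∘ Prod.fst) (h i (by omega))

lemma ContinuousRF.exists_hist_transitions_eq {f : ARun A → ARun B} (hf : ContinuousRF f)
    (ρ : ARun A) (N : ℕ) : ∃ m, ∀ n ≥ m, ∀ τ : ARun A,
      hist (transitions τ) n = hist (transitions ρ) n →
        hist (transitions (f τ)) N = hist (transitions (f ρ)) N := by
  obtain ⟨m, hm⟩ := hf ρ (2 * N + 1)
  refine ⟨m, fun n hn τ hτ => ?_⟩
  rw [← seqOf_eq_iff_hist_transitions_eq] at hτ ⊢
  exact hm τ fun j hj => hτ j (by omega)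

lemma transitions_eq_of_spState {s : ℕ → α × A.Q} {ρ : ARun A}
    (hstates : ρ.val.1 = spState A s) (hletters : ρ.val.2 = fun n => (s n).1) :
    transitions ρ = s := by
  funext n
  rw [transitions, hstates, hletters]
  rfl

end Runs

section Strategy

variable {A B : NBA α} (f : ARun A → ARun B)

def Extends (h : List (α × A.Q)) (ρ : ARun A) : Prop :=
  hist (transitions ρ) h.length = h

def Determined (h : List (α × A.Q)) (n : ℕ) : Prop :=
  ∀ ρ ρ', Extends h ρ → Extends h ρ' →
    hist (transitions (f ρ)) n = hist (transitions (f ρ')) n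

/-- Capped at `h.length` so that the maximum exists. -/
def outLength (h : List (α × A.Q)) : ℕ :=
  Nat.findGreatest (Determined f h) h.length

/-- Duplicator's total output after Spoiler has played `h`. -/
def output (h : List (α × A.Q)) : List (α × B.Q) :=
  if hc : ∃ ρ, Extends h ρ then hist (transitions (f hc.choose)) (outLength f h) else []

def dupStrat (h : List (α × A.Q)) : List (α × B.Q) :=
  (output f h).drop (output f h.dropLast).length

lemma Extends.take {h : List (α × A.Q)} {ρ : ARun A} (hρ : Extends h ρ) (m : ℕ) :
    Extends (h.take m) ρ := by
  rw [Extends, ← hρ, take_hist, hist_length]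

lemma extends_hist_transitions (ρ : ARun A) (n : ℕ) : Extends (hist (transitions ρ) n) ρ := by
  rw [Extends, hist_length]

lemma determined_outLength (h : List (α × A.Q)) : Determined f h (outLength f h) :=
  Nat.findGreatest_spec (Nat.zero_le _) fun _ _ _ _ => rfl

lemma outLength_take_le (h : List (α × A.Q)) (m : ℕ) :
    outLength f (h.take m) ≤ outLength f h :=
  Nat.le_findGreatest ((Nat.findGreatest_le _).trans (List.length_take_le' m h))
    fun ρ ρ' hρ hρ' => determined_outLength f _ ρ ρ' (hρ.take m) (hρ'.take m)

lemma output_eq {h : List (α × A.Q)} {ρ : ARun A} (hρ : Extends h ρ) :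
    output f h = hist (transitions (f ρ)) (outLength f h) := by
  have hc : ∃ ρ, Extends h ρ := ⟨ρ, hρ⟩
  rw [output, dif_pos hc]
  exact determined_outLength f h _ _ hc.choose_spec hρ

lemma output_nil : output f ([] : List (α × A.Q)) = [] := by
  unfold output
  split_ifs
  · rw [outLength, List.length_nil, Nat.findGreatest_zero]
    rfl
  · rfl

lemma output_take_prefix {h : List (α × A.Q)} {ρ : ARun A} (hρ : Extends h ρ) (m : ℕ) :
    output f (h.take m) <+: output f h := by
  rw [output_eq f hρ, output_eq f (hρ.take m)]
  exact hist_prefix_hist _ (outLength_take_le f h m)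

lemma finRunOk_output (h : List (α × A.Q)) : FinRunOk B B.init (output f h) := by
  unfold output
  split_ifs
  · exact finRunOk_hist_transitions _ _
  · trivial

lemma dOut_dupStrat_eq_output (s : ℕ → α × A.Q) {n : ℕ} {ρ : ARun A}
    (hρ : Extends (hist s n) ρ) : dOut (dupStrat f) s n = output f (hist s n) := by
  induction n with
  | zero => exact (output_nil f).symm
  | succ n ih =>
    have htake : (hist s (n + 1)).take n = hist s n := by
      rw [take_hist, min_eq_left n.le_succ]
    have hprefix := output_take_prefix f hρ n
    rw [htake] at hprefix
    rw [dOut, ih (htake ▸ hρ.take n), dupStrat, hist_succ, List.dropLast_concat, ← hist_succ]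
    exact List.prefix_iff_eq_append.mp hprefix

/-- Once Spoiler's play has no accepting continuation, Duplicator stops playing. -/
lemma exists_dOut_dupStrat_eq_output (s : ℕ → α × A.Q) (n : ℕ) :
    ∃ m, dOut (dupStrat f) s n = output f (hist s m) := by
  induction n with
  | zero => exact ⟨0, (output_nil f).symm⟩
  | succ n ih =>
    by_cases hc : ∃ ρ, Extends (hist s (n + 1)) ρ
    · exact ⟨n + 1, dOut_dupStrat_eq_output f s hc.choose_spec⟩
    · obtain ⟨m, hm⟩ := ih
      refine ⟨m, ?_⟩
      have hstuck : output f (hist s (n + 1)) = [] := dif_neg hc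
      rw [dOut, hm, dupStrat, hstuck, List.drop_nil, List.append_nil]

lemma ContinuousRF.exists_le_outLength {f : ARun A → ARun B} (hf : ContinuousRF f)
    (ρ : ARun A) (N : ℕ) : ∃ n, N ≤ outLength f (hist (transitions ρ) n) := by
  obtain ⟨m, hm⟩ := hf.exists_hist_transitions_eq ρ N
  refine ⟨max m N, Nat.le_findGreatest (by rw [hist_length]; exact le_max_right m N) ?_⟩
  intro τ τ' hτ hτ'
  rw [Extends, hist_length] at hτ hτ'
  rw [hm _ (le_max_left m N) τ hτ, hm _ (le_max_left m N) τ' hτ']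

end Strategy

theorem delayWin_of_continuous_general {α : Type} (A B : NBA α)
    (f : ARun A → ARun B) (hf : ContinuousRF f) : DelayWin A B f := by
  refine ⟨dupStrat f, fun s => ⟨fun n _ => ?_, fun _ ρ hstates hletters => ?_⟩⟩
  · obtain ⟨m, hm⟩ := exists_dOut_dupStrat_eq_output f s n
    rw [hm]
    exact finRunOk_output f _
  · obtain rfl := transitions_eq_of_spState hstates hletters
    have hdOut (n : ℕ) : dOut (dupStrat f) (transitions ρ) n =
        hist (transitions (f ρ)) (outLength f (hist (transitions ρ) n)) :=
      (dOut_dupStrat_eq_output f _ (extends_hist_transitions ρ n)).trans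
        (output_eq f (extends_hist_transitions ρ n))
    refine ⟨fun N => ?_, fun n i x hx => ?_⟩
    · obtain ⟨n, hn⟩ := hf.exists_le_outLength ρ N
      exact ⟨n, by rwa [hdOut, hist_length]⟩
    · rw [hdOut, getElem?_hist] at hx
      split_ifs at hx
      exact (Option.some.inj hx).symm

/-- **Lemma.** If `f : ARun(A) → ARun(B)` is continuous (w.r.t. the metric
`d(x,y) = inf {2^{-i} ∣ x_j = y_j for all j < i}`), then Duplicator has a winning
strategy in the delay game `G^f_del(A,B)`, i.e. `A ⊑^f_del B`. -/
theorem delayWin_of_continuous {α : Type} [Fintype α] (A B : NBA α)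
    (f : ARun A → ARun B) (hf : ContinuousRF f) : DelayWin A B f :=
  delayWin_of_continuous_general A B f hf

end MultiBuffer
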